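/- Let (Q₋₁ ⊆ P₋₁ ⊆ P₀, Q₋₁ ⊆ Q₀ ⊆ P₀, τ) be a commuting square. Then dim span{[p,q] : p ∈ P₋₁, q ∈ Q₀} ≤ dim P₀ − dim((Q₋₁' ∩ P₋₁) + (Q₋₁' ∩ Q₀) + (P₋₁' ∩ P₀) + (Q₀' ∩ P₀)). -/
import Mathlib


open Matrix

/-- `E` is the `τ`-preserving conditional expectation of `Mₙ(ℂ)` onto the unital
*-subalgebra `B`. -/
def IsCondExp {n : ℕ} (τ : Matrix (Fin n) (Fin n) ℂ →ₗ[ℂ] ℂ)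
    (B : StarSubalgebra ℂ (Matrix (Fin n) (Fin n) ℂ))
    (E : Matrix (Fin n) (Fin n) ℂ →ₗ[ℂ] Matrix (Fin n) (Fin n) ℂ) : Prop :=
  (∀ x, E x ∈ B) ∧ (∀ b ∈ B, E b = b) ∧ ∀ x, ∀ b ∈ B, τ (bᴴ * (x - E x)) = 0

/-- The relative commutant `B' ∩ A`, as a subspace of `Mₙ(ℂ)`. -/
noncomputable def relCommutant {n : ℕ} (B A : StarSubalgebra ℂ (Matrix (Fin n) (Fin n) ℂ)) :
    Submodule ℂ (Matrix (Fin n) (Fin n) ℂ) where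
  carrier := {x | x ∈ A ∧ ∀ b ∈ B, x * b = b * x}
  add_mem' := by
    rintro x y ⟨hxA, hx⟩ ⟨hyA, hy⟩
    exact ⟨add_mem hxA hyA, fun b hb => by rw [add_mul, mul_add, hx b hb, hy b hb]⟩
  zero_mem' := ⟨zero_mem _, fun b _ => by simp⟩
  smul_mem' := by
    rintro c x ⟨hxA, hx⟩
    exact ⟨SMulMemClass.smul_mem c hxA,
      fun b hb => by rw [smul_mul_assoc, mul_smul_comm, hx b hb]⟩

lemma condexp_mul_left' {n : ℕ} {τ : Matrix (Fin n) (Fin n) ℂ →ₗ[ℂ] ℂ}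
    {B : StarSubalgebra ℂ (Matrix (Fin n) (Fin n) ℂ)}
    {E : Matrix (Fin n) (Fin n) ℂ →ₗ[ℂ] Matrix (Fin n) (Fin n) ℂ}
    (hE : IsCondExp τ B E) {b : Matrix (Fin n) (Fin n) ℂ} (hb : b ∈ B)
    (x : Matrix (Fin n) (Fin n) ℂ) : τ (b * x) = τ (b * E x) := by
  have h := hE.2.2 x (star b) (star_mem hb)
  rw [← Matrix.star_eq_conjTranspose, star_star, mul_sub, map_sub, sub_eq_zero] at h
  exact h

lemma condexp_selfadj' {n : ℕ} {τ : Matrix (Fin n) (Fin n) ℂ →ₗ[ℂ] ℂ}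
    (hstar : ∀ x, τ xᴴ = star (τ x))
    {B : StarSubalgebra ℂ (Matrix (Fin n) (Fin n) ℂ)}
    {E : Matrix (Fin n) (Fin n) ℂ →ₗ[ℂ] Matrix (Fin n) (Fin n) ℂ}
    (hE : IsCondExp τ B E) (x y : Matrix (Fin n) (Fin n) ℂ) :
    τ (xᴴ * E y) = τ ((E x)ᴴ * y) := by
  have hb1 : (E x)ᴴ ∈ B := by
    rw [← Matrix.star_eq_conjTranspose]; exact star_mem (hE.1 x)
  have hb2 : (E y)ᴴ ∈ B := by
    rw [← Matrix.star_eq_conjTranspose]; exact star_mem (hE.1 y)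
  have h1 : τ ((E x)ᴴ * y) = τ ((E x)ᴴ * E y) := condexp_mul_left' hE hb1 y
  have h2 : τ ((E y)ᴴ * x) = τ ((E y)ᴴ * E x) := condexp_mul_left' hE hb2 x
  calc τ (xᴴ * E y) = τ (((E y)ᴴ * x)ᴴ) := by
        rw [conjTranspose_mul, conjTranspose_conjTranspose]
    _ = star (τ ((E y)ᴴ * x)) := hstar _
    _ = star (τ ((E y)ᴴ * E x)) := by rw [h2]
    _ = τ (((E y)ᴴ * E x)ᴴ) := (hstar _).symm
    _ = τ ((E x)ᴴ * E y) := by rw [conjTranspose_mul, conjTranspose_conjTranspose]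
    _ = τ ((E x)ᴴ * y) := h1.symm

lemma relCommutant_star_mem' {n : ℕ} {B A : StarSubalgebra ℂ (Matrix (Fin n) (Fin n) ℂ)}
    {w : Matrix (Fin n) (Fin n) ℂ} (hw : w ∈ relCommutant B A) : wᴴ ∈ relCommutant B A := by
  obtain ⟨hwA, hwc⟩ := hw
  refine ⟨by rw [← Matrix.star_eq_conjTranspose]; exact star_mem hwA, fun b hb => ?_⟩
  have hb' : bᴴ ∈ B := by rw [← Matrix.star_eq_conjTranspose]; exact star_mem hb
  calc wᴴ * b = (bᴴ * w)ᴴ := by rw [conjTranspose_mul, conjTranspose_conjTranspose]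
    _ = (w * bᴴ)ᴴ := by rw [hwc _ hb']
    _ = b * wᴴ := by rw [conjTranspose_mul, conjTranspose_conjTranspose]

/-- In a commuting square `(Q₋₁ ⊆ P₋₁ ⊆ P₀, Q₋₁ ⊆ Q₀ ⊆ P₀, τ)` with `P₀ = Mₙ(ℂ)`:
`dim span{[p,q]} ≤ dim P₀ − dim((Q₋₁'∩P₋₁) + (Q₋₁'∩Q₀) + (P₋₁'∩P₀) + (Q₀'∩P₀))`. -/
theorem finrank_commutators_le {n : ℕ}
    (τ : Matrix (Fin n) (Fin n) ℂ →ₗ[ℂ] ℂ)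
    (htr : ∀ x y, τ (x * y) = τ (y * x)) (hτ1 : τ 1 = 1)
    (hstar : ∀ x, τ xᴴ = star (τ x))
    (hfaith : ∀ x, τ (xᴴ * x) = 0 → x = 0)
    (Qm Pm Q0 : StarSubalgebra ℂ (Matrix (Fin n) (Fin n) ℂ))
    (hQP : Qm ≤ Pm) (hQQ : Qm ≤ Q0)
    (EPm EQ0 EQm : Matrix (Fin n) (Fin n) ℂ →ₗ[ℂ] Matrix (Fin n) (Fin n) ℂ)
    (hEP : IsCondExp τ Pm EPm) (hEQ0 : IsCondExp τ Q0 EQ0) (hEQm : IsCondExp τ Qm EQm)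
    (hcs : ∀ x, EPm (EQ0 x) = EQm x) :
    Module.finrank ℂ (Submodule.span ℂ {x : Matrix (Fin n) (Fin n) ℂ |
        ∃ p ∈ Pm, ∃ q ∈ Q0, x = p * q - q * p}) ≤
      Module.finrank ℂ (Matrix (Fin n) (Fin n) ℂ) -
        Module.finrank ℂ
          (relCommutant Qm Pm ⊔ relCommutant Qm Q0 ⊔ relCommutant Pm ⊤ ⊔ relCommutant Q0 ⊤ :
            Submodule ℂ (Matrix (Fin n) (Fin n) ℂ)) := by
  classical
  -- The reversed commuting square condition
  have hcs' : ∀ x, EQ0 (EPm x) = EQm x := by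
    intro x
    set d := EQ0 (EPm x) - EQm x with hd
    have key : τ (dᴴ * d) = 0 := by
      have h1 : τ (dᴴ * EQ0 (EPm x)) = τ ((EQ0 d)ᴴ * EPm x) :=
        condexp_selfadj' hstar hEQ0 d (EPm x)
      have h2 : τ ((EQ0 d)ᴴ * EPm x) = τ ((EPm (EQ0 d))ᴴ * x) := by
        have := condexp_selfadj' hstar hEP (EQ0 d) x
        exact this.symm ▸ (condexp_selfadj' hstar hEP (EQ0 d) x).symm ▸ rfl
      have h3 : τ ((EQm d)ᴴ * x) = τ (dᴴ * EQm x) :=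
        (condexp_selfadj' hstar hEQm d x).symm
      have h2' : τ ((EQ0 d)ᴴ * EPm x) = τ (dᴴ * EQm x) := by
        have hsa := condexp_selfadj' hstar hEP (EQ0 d) x
        -- hsa : τ ((EQ0 d)ᴴ * EPm x) = ... careful with direction
        have hsa' : τ ((EQ0 d)ᴴ * EPm x) = τ ((EPm (EQ0 d))ᴴ * x) :=
          condexp_selfadj' hstar hEP (EQ0 d) x
        rw [hsa', hcs d]
        exact h3
      have : τ (dᴴ * EQ0 (EPm x)) = τ (dᴴ * EQm x) := by rw [h1, h2']
      have hexp : dᴴ * d = dᴴ * EQ0 (EPm x) - dᴴ * EQm x := by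
        rw [hd, mul_sub]
      rw [hexp, map_sub, this, sub_self]
    have := hfaith d key
    exact sub_eq_zero.mp this
  -- Core orthogonality computations: for c in each relative commutant,
  -- τ (c * (p*q - q*p)) = 0.
  have coreA : ∀ c ∈ relCommutant Pm ⊤, ∀ p ∈ Pm, ∀ q ∈ Q0,
      τ (c * (p * q - q * p)) = 0 := by
    rintro c ⟨-, hc⟩ p hp q hq
    rw [mul_sub, map_sub, sub_eq_zero]
    calc τ (c * (p * q)) = τ ((c * p) * q) := by rw [mul_assoc]
      _ = τ ((p * c) * q) := by rw [hc p hp]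
      _ = τ (p * (c * q)) := by rw [mul_assoc]
      _ = τ ((c * q) * p) := htr _ _
      _ = τ (c * (q * p)) := by rw [mul_assoc]
  have coreB : ∀ c ∈ relCommutant Q0 ⊤, ∀ p ∈ Pm, ∀ q ∈ Q0,
      τ (c * (p * q - q * p)) = 0 := by
    rintro c ⟨-, hc⟩ p hp q hq
    rw [mul_sub, map_sub, sub_eq_zero]
    calc τ (c * (p * q)) = τ ((p * q) * c) := htr _ _
      _ = τ (p * (q * c)) := by rw [mul_assoc]
      _ = τ (p * (c * q)) := by rw [hc q hq]
      _ = τ ((p * c) * q) := by rw [mul_assoc]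
      _ = τ (q * (p * c)) := (htr _ _).symm
      _ = τ ((q * p) * c) := by rw [mul_assoc]
      _ = τ (c * (q * p)) := (htr _ _).symm
  have coreC : ∀ c ∈ relCommutant Qm Pm, ∀ p ∈ Pm, ∀ q ∈ Q0,
      τ (c * (p * q - q * p)) = 0 := by
    rintro c ⟨hcP, hc⟩ p hp q hq
    set e := EPm q with he
    have heQ : e ∈ Qm := by
      have h0 : EQ0 q = q := hEQ0.2.1 q hq
      have h1 := hcs q
      rw [h0] at h1
      rw [he, h1]; exact hEQm.1 q
    have hce : c * e = e * c := hc e heQ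
    rw [mul_sub, map_sub, sub_eq_zero]
    have l1 : τ (c * (p * q)) = τ (c * (p * e)) := by
      calc τ (c * (p * q)) = τ ((c * p) * q) := by rw [mul_assoc]
        _ = τ ((c * p) * e) := condexp_mul_left' hEP (mul_mem hcP hp) q
        _ = τ (c * (p * e)) := by rw [mul_assoc]
    have l2 : τ (c * (q * p)) = τ (c * (p * e)) := by
      calc τ (c * (q * p)) = τ ((q * p) * c) := htr _ _
        _ = τ (q * (p * c)) := by rw [mul_assoc]
        _ = τ ((p * c) * q) := htr _ _
        _ = τ ((p * c) * e) := condexp_mul_left' hEP (mul_mem hp hcP) q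
        _ = τ (p * (c * e)) := by rw [mul_assoc]
        _ = τ (p * (e * c)) := by rw [hce]
        _ = τ ((p * e) * c) := by rw [mul_assoc]
        _ = τ (c * (p * e)) := (htr _ _).symm
    rw [l1, l2]
  have coreD : ∀ c ∈ relCommutant Qm Q0, ∀ p ∈ Pm, ∀ q ∈ Q0,
      τ (c * (p * q - q * p)) = 0 := by
    rintro c ⟨hcQ, hc⟩ p hp q hq
    set f := EQ0 p with hf
    have hfQ : f ∈ Qm := by
      have h0 : EPm p = p := hEP.2.1 p hp
      have h1 := hcs' p
      rw [h0] at h1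
      rw [hf, h1]; exact hEQm.1 p
    have hcf : c * f = f * c := hc f hfQ
    rw [mul_sub, map_sub, sub_eq_zero]
    have l1 : τ (c * (q * p)) = τ (c * (q * f)) := by
      calc τ (c * (q * p)) = τ ((c * q) * p) := by rw [mul_assoc]
        _ = τ ((c * q) * f) := condexp_mul_left' hEQ0 (mul_mem hcQ hq) p
        _ = τ (c * (q * f)) := by rw [mul_assoc]
    have l2 : τ (c * (p * q)) = τ (c * (q * f)) := by
      calc τ (c * (p * q)) = τ ((p * q) * c) := htr _ _
        _ = τ (p * (q * c)) := by rw [mul_assoc]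
        _ = τ ((q * c) * p) := htr _ _
        _ = τ ((q * c) * f) := condexp_mul_left' hEQ0 (mul_mem hq hcQ) p
        _ = τ (q * (c * f)) := by rw [mul_assoc]
        _ = τ (q * (f * c)) := by rw [hcf]
        _ = τ ((q * f) * c) := by rw [mul_assoc]
        _ = τ (c * (q * f)) := (htr _ _).symm
    rw [l2, l1]
  set W : Submodule ℂ (Matrix (Fin n) (Fin n) ℂ) :=
    relCommutant Qm Pm ⊔ relCommutant Qm Q0 ⊔ relCommutant Pm ⊤ ⊔ relCommutant Q0 ⊤ with hW
  -- the "orthogonal kernel" of a fixed x, as a submodule in w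
  have Kdef : ∀ x : Matrix (Fin n) (Fin n) ℂ, ∃ K : Submodule ℂ (Matrix (Fin n) (Fin n) ℂ), ∀ w, w ∈ K ↔ τ (wᴴ * x) = 0 := by
    intro x
    refine ⟨{ carrier := {w | τ (wᴴ * x) = 0}
              add_mem' := ?_
              zero_mem' := ?_
              smul_mem' := ?_ }, fun w => Iff.rfl⟩
    · intro a b ha hb
      simp only [Set.mem_setOf_eq] at *
      rw [conjTranspose_add, add_mul, map_add, ha, hb, add_zero]
    · simp
    · intro c a ha
      simp only [Set.mem_setOf_eq] at *
      rw [conjTranspose_smul, smul_mul_assoc, τ.map_smul, ha, smul_zero]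
  -- N : elements orthogonal to everything in W
  have Ndef : ∃ N : Submodule ℂ (Matrix (Fin n) (Fin n) ℂ), ∀ x, x ∈ N ↔ ∀ w ∈ W, τ (wᴴ * x) = 0 := by
    refine ⟨{ carrier := {x | ∀ w ∈ W, τ (wᴴ * x) = 0}
              add_mem' := ?_
              zero_mem' := ?_
              smul_mem' := ?_ }, fun x => Iff.rfl⟩
    · intro a b ha hb
      intro w hw
      rw [mul_add, map_add, ha w hw, hb w hw, add_zero]
    · intro w hw; simp
    · intro c a ha w hw
      rw [mul_smul_comm, τ.map_smul, ha w hw, smul_zero]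
  obtain ⟨N, hN⟩ := Ndef
  -- span of commutators lies in N
  have hspan : Submodule.span ℂ {x : Matrix (Fin n) (Fin n) ℂ | ∃ p ∈ Pm, ∃ q ∈ Q0, x = p * q - q * p} ≤ N := by
    rw [Submodule.span_le]
    rintro x ⟨p, hp, q, hq, rfl⟩
    rw [SetLike.mem_coe, hN]
    intro w hw
    obtain ⟨K, hK⟩ := Kdef (p * q - q * p)
    have hWK : W ≤ K := by
      rw [hW]
      refine sup_le (sup_le (sup_le ?_ ?_) ?_) ?_ <;> intro w hw <;> rw [hK]
      · exact coreC wᴴ (relCommutant_star_mem' hw) p hp q hq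
      · exact coreD wᴴ (relCommutant_star_mem' hw) p hp q hq
      · exact coreA wᴴ (relCommutant_star_mem' hw) p hp q hq
      · exact coreB wᴴ (relCommutant_star_mem' hw) p hp q hq
    exact (hK w).mp (hWK hw)
  -- N and W intersect trivially
  have hdisj : N ⊓ W = ⊥ := by
    rw [eq_bot_iff]
    intro x hx
    rw [Submodule.mem_inf] at hx
    rw [Submodule.mem_bot]
    exact hfaith x ((hN x).mp hx.1 x hx.2)
  have hrank : Module.finrank ℂ N + Module.finrank ℂ W ≤
      Module.finrank ℂ (Matrix (Fin n) (Fin n) ℂ) := by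
    have h := Submodule.finrank_sup_add_finrank_inf_eq N W
    rw [hdisj, finrank_bot, add_zero] at h
    rw [← h]
    exact Submodule.finrank_le _
  have hle : Module.finrank ℂ
      (Submodule.span ℂ {x : Matrix (Fin n) (Fin n) ℂ | ∃ p ∈ Pm, ∃ q ∈ Q0, x = p * q - q * p}) ≤
      Module.finrank ℂ N := Submodule.finrank_mono hspan
  omega
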